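/- arXiv:2401.04613 — 7 statements merged into one kernel-verified Lean document; each statement's English description precedes it below -/
import Mathlib

section
/- For every b > 0, the function k ↦ κ^{b,k} := -2(E(k) + √(1-k²)·K(k)) / (π b (1 + √(1-k²))) is strictly increasing on the open interval (0,1). In particular, for every b > 0 and k ∈ (0,1) the derivative ∂_k κ^{b,k} is nonzero. -/
open Real

/-- Complete elliptic integral of the first kind. -/
noncomputable def ellK (k : ℝ) : ℝ :=
  ∫ u in (0:ℝ)..(π/2), 1 / Real.sqrt (1 - k^2 * Real.sin u ^ 2)

/-- Complete elliptic integral of the second kind. -/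
noncomputable def ellE (k : ℝ) : ℝ :=
  ∫ u in (0:ℝ)..(π/2), Real.sqrt (1 - k^2 * Real.sin u ^ 2)

/-- The constant mean curvature of the unduloid with size parameter `b` and
shape parameter `k`. -/
noncomputable def kappa (b k : ℝ) : ℝ :=
  -2 * (ellE k + Real.sqrt (1 - k^2) * ellK k) / (π * b * (1 + Real.sqrt (1 - k^2)))


/-!
With `w = √(1 - k² sin² u)` and `c = √(1 - k²)`, combining `E` and `K` into one integral gives
`κ^{b,k} = -2/(π b) ∫₀^{π/2} (w + c/w)/(1 + c) du`. The integrand is pointwise decreasing in `k`, with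
`∂ₖ ((w + c/w)/(1 + c)) = -k³ sin² u cos² u / (c (1 + c) w³)`, so differentiating under the
integral sign shows `∂ₖ κ^{b,k} > 0`.
-/

open Set

theorem hasDerivAt_intervalIntegral_of_continuousOn {E : Type*} [NormedAddCommGroup E]
    [NormedSpace ℝ E] {F F' : ℝ → ℝ → E} {x₀ r a b : ℝ} (hr : 0 < r)
    (hF : ∀ x ∈ Metric.ball x₀ r, ContinuousOn (F x) (uIcc a b))
    (hF' : ContinuousOn (Function.uncurry F') (Metric.closedBall x₀ r ×ˢ uIcc a b))
    (hdiff : ∀ x ∈ Metric.ball x₀ r, ∀ t ∈ uIcc a b, HasDerivAt (F · t) (F' x t) x) :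
    HasDerivAt (fun x => ∫ t in a..b, F x t) (∫ t in a..b, F' x₀ t) x₀ := by
  obtain ⟨C, hC⟩ :=
    ((isCompact_closedBall x₀ r).prod isCompact_uIcc).exists_bound_of_continuousOn hF'
  have hx₀ : x₀ ∈ Metric.ball x₀ r := Metric.mem_ball_self hr
  have hF'x₀ : ContinuousOn (F' x₀) (uIcc a b) :=
    hF'.comp (continuousOn_const.prodMk continuousOn_id) fun t ht =>
      ⟨Metric.mem_closedBall_self hr.le, ht⟩
  refine (intervalIntegral.hasDerivAt_integral_of_dominated_loc_of_deriv_le (bound := fun _ => C)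
    (Metric.ball_mem_nhds x₀ hr) ?_ (hF x₀ hx₀).intervalIntegrable
    ((hF'x₀.mono uIoc_subset_uIcc).aestronglyMeasurable measurableSet_uIoc) ?_
    intervalIntegrable_const ?_).2
  · filter_upwards [Metric.ball_mem_nhds x₀ hr] with x hx
    exact ((hF x hx).mono uIoc_subset_uIcc).aestronglyMeasurable measurableSet_uIoc
  · exact MeasureTheory.ae_of_all _ fun t ht x hx =>
      hC (x, t) ⟨Metric.ball_subset_closedBall hx, uIoc_subset_uIcc ht⟩
  · exact MeasureTheory.ae_of_all _ fun t ht x hx => hdiff x hx t (uIoc_subset_uIcc ht)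

lemma one_sub_sq_pos {k : ℝ} (hk : |k| < 1) : 0 < 1 - k ^ 2 :=
  sub_pos.2 ((sq_lt_one_iff_abs_lt_one k).2 hk)

lemma one_sub_sq_mul_sin_sq_pos {k : ℝ} (hk : |k| < 1) (u : ℝ) : 0 < 1 - k ^ 2 * sin u ^ 2 := by
  nlinarith [one_sub_sq_pos hk, sin_sq_le_one u, sq_nonneg k]

noncomputable def kappaIntegrand (k u : ℝ) : ℝ :=
  (√(1 - k ^ 2 * sin u ^ 2) + √(1 - k ^ 2) * (1 / √(1 - k ^ 2 * sin u ^ 2))) / (1 + √(1 - k ^ 2))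

noncomputable def kappaIntegrandDeriv (k u : ℝ) : ℝ :=
  -(k ^ 3 * sin u ^ 2 * cos u ^ 2) /
    (√(1 - k ^ 2) * (1 + √(1 - k ^ 2)) * √(1 - k ^ 2 * sin u ^ 2) ^ 3)

lemma continuous_inv_sqrt_one_sub_sq_mul_sin_sq {k : ℝ} (hk : |k| < 1) :
    Continuous fun u => 1 / √(1 - k ^ 2 * sin u ^ 2) :=
  continuous_const.div (by fun_prop) fun u => (sqrt_pos.2 (one_sub_sq_mul_sin_sq_pos hk u)).ne'

lemma continuous_kappaIntegrand {k : ℝ} (hk : |k| < 1) : Continuous (kappaIntegrand k) :=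
  ((by fun_prop : Continuous fun u => √(1 - k ^ 2 * sin u ^ 2)).add
    (continuous_const.mul (continuous_inv_sqrt_one_sub_sq_mul_sin_sq hk))).div_const _

lemma kappa_eq_integral (b : ℝ) {k : ℝ} (hk : |k| < 1) :
    kappa b k = -2 / (π * b) * ∫ u in (0 : ℝ)..π / 2, kappaIntegrand k u := by
  have hE : IntervalIntegrable (fun u => √(1 - k ^ 2 * sin u ^ 2)) MeasureTheory.volume 0 (π / 2) :=
    (by fun_prop : Continuous fun u => √(1 - k ^ 2 * sin u ^ 2)).intervalIntegrable _ _
  have hK := (continuous_inv_sqrt_one_sub_sq_mul_sin_sq hk).intervalIntegrable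
    (μ := MeasureTheory.volume) 0 (π / 2)
  simp only [kappaIntegrand, intervalIntegral.integral_div,
    intervalIntegral.integral_add hE (hK.const_mul _), intervalIntegral.integral_const_mul]
  rw [kappa, ellE, ellK, div_mul_div_comm]

lemma hasDerivAt_kappaIntegrand {k : ℝ} (hk : |k| < 1) (u : ℝ) :
    HasDerivAt (kappaIntegrand · u) (kappaIntegrandDeriv k u) k := by
  have hW := one_sub_sq_mul_sin_sq_pos hk u
  have hC := one_sub_sq_pos hk
  have hw := ((hasDerivAt_pow 2 k).mul_const (sin u ^ 2)).const_sub 1 |>.sqrt hW.ne'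
  have hc := ((hasDerivAt_pow 2 k).const_sub 1).sqrt hC.ne'
  have hw0 := (sqrt_pos.2 hW).ne'
  have hc0 := sqrt_pos.2 hC
  refine ((hw.add (hc.mul ((hasDerivAt_const k 1).div hw hw0))).div (hc.const_add 1)
    (by positivity)).congr_deriv ?_
  have hsq_w := sq_sqrt hW.le
  have hsq_c := sq_sqrt hC.le
  have hs := sin_sq_add_cos_sq u
  simp only [kappaIntegrandDeriv, Pi.div_apply, Pi.add_apply, Pi.mul_apply, Nat.cast_ofNat,
    Nat.reduceSub, pow_one]
  generalize √(1 - k ^ 2 * sin u ^ 2) = w at *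
  generalize √(1 - k ^ 2) = c at *
  generalize sin u = s at *
  generalize cos u = q at *
  field_simp
  linear_combination k * ((-s ^ 2 * c - 1 - s ^ 2 * c ^ 2 + w ^ 2 + (1 - k ^ 2 * s ^ 2)) * hsq_w
    + (s ^ 2 - s ^ 2 * (1 - k ^ 2 * s ^ 2) + s ^ 2 * c) * hsq_c + k ^ 2 * s ^ 2 * (1 + c) * hs)

lemma continuousOn_kappaIntegrandDeriv :
    ContinuousOn (Function.uncurry kappaIntegrandDeriv) ({k | |k| < 1} ×ˢ univ) := by
  refine ContinuousOn.div (by fun_prop) (by fun_prop) fun p hp => ?_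
  have hW := one_sub_sq_mul_sin_sq_pos hp.1 p.2
  have := sqrt_pos.2 hW
  have := sqrt_pos.2 (one_sub_sq_pos hp.1)
  positivity

lemma hasDerivAt_integral_kappaIntegrand {k : ℝ} (hk : |k| < 1) :
    HasDerivAt (fun k => ∫ u in (0 : ℝ)..π / 2, kappaIntegrand k u)
      (∫ u in (0 : ℝ)..π / 2, kappaIntegrandDeriv k u) k := by
  have hball : Metric.closedBall k ((1 - |k|) / 2) ⊆ {x | |x| < 1} := fun x hx => by
    have := abs_sub_abs_le_abs_sub x k
    rw [Metric.mem_closedBall, Real.dist_eq] at hx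
    show |x| < 1
    linarith
  refine hasDerivAt_intervalIntegral_of_continuousOn (by linarith) (fun x hx => ?_)
    (continuousOn_kappaIntegrandDeriv.mono (prod_mono hball (subset_univ _)))
    fun x hx u _ => hasDerivAt_kappaIntegrand (hball (Metric.ball_subset_closedBall hx)) u
  exact (continuous_kappaIntegrand (hball (Metric.ball_subset_closedBall hx))).continuousOn

lemma kappaIntegrandDeriv_neg {k u : ℝ} (hk0 : 0 < k) (hk1 : |k| < 1)
    (hu : u ∈ Ioo 0 (π / 2)) : kappaIntegrandDeriv k u < 0 := by
  have hsin := sin_pos_of_pos_of_lt_pi hu.1 (by linarith [hu.2, pi_pos])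
  have hcos := cos_pos_of_mem_Ioo ⟨by linarith [hu.1, pi_pos], hu.2⟩
  have hW := sqrt_pos.2 (one_sub_sq_mul_sin_sq_pos hk1 u)
  have hC := sqrt_pos.2 (one_sub_sq_pos hk1)
  exact div_neg_of_neg_of_pos (by simp only [neg_lt_zero]; positivity) (by positivity)

lemma integral_kappaIntegrandDeriv_neg {k : ℝ} (hk0 : 0 < k) (hk1 : |k| < 1) :
    ∫ u in (0 : ℝ)..π / 2, kappaIntegrandDeriv k u < 0 := by
  have hcont : Continuous (kappaIntegrandDeriv k) :=
    continuousOn_kappaIntegrandDeriv.comp_continuous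
      (continuous_const.prodMk continuous_id) fun u => ⟨hk1, mem_univ u⟩
  have := intervalIntegral.intervalIntegral_pos_of_pos_on (f := fun u => -kappaIntegrandDeriv k u)
    (hcont.neg.intervalIntegrable 0 (π / 2))
    (fun u hu => neg_pos.2 (kappaIntegrandDeriv_neg hk0 hk1 hu)) (by positivity)
  rwa [intervalIntegral.integral_neg, neg_pos] at this

lemma hasDerivAt_kappa (b : ℝ) {k : ℝ} (hk : |k| < 1) :
    HasDerivAt (kappa b) (-2 / (π * b) * ∫ u in (0 : ℝ)..π / 2, kappaIntegrandDeriv k u) k := by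
  refine ((hasDerivAt_integral_kappaIntegrand hk).const_mul _).congr_of_eventuallyEq ?_
  filter_upwards [(isOpen_lt continuous_abs continuous_const).mem_nhds hk] with x hx
  exact kappa_eq_integral b hx

theorem stmt_0 (b : ℝ) (hb : 0 < b) :
    StrictMonoOn (fun k => kappa b k) (Set.Ioo (0:ℝ) 1) ∧
    ∀ k ∈ Set.Ioo (0:ℝ) 1, deriv (fun k => kappa b k) k ≠ 0 := by
  have habs {k : ℝ} (hk : k ∈ Ioo (0 : ℝ) 1) : |k| < 1 := abs_lt.2 ⟨by linarith [hk.1], hk.2⟩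
  have hderiv (k : ℝ) (hk : k ∈ Ioo 0 1) := hasDerivAt_kappa b (habs hk)
  have hpos (k : ℝ) (hk : k ∈ Ioo 0 1) :
      0 < -2 / (π * b) * ∫ u in (0 : ℝ)..π / 2, kappaIntegrandDeriv k u :=
    mul_pos_of_neg_of_neg (div_neg_of_neg_of_pos (by norm_num) (by positivity))
      (integral_kappaIntegrandDeriv_neg hk.1 (habs hk))
  refine ⟨strictMonoOn_of_deriv_pos (convex_Ioo 0 1)
    (fun k hk => (hderiv k hk).continuousAt.continuousWithinAt) fun k hk => ?_, fun k hk => ?_⟩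
  · rw [interior_Ioo] at hk
    rw [(hderiv k hk).deriv]
    exact hpos k hk
  · rw [(hderiv k hk).deriv]
    exact (hpos k hk).ne'
end

section
/- For every k ∈ (0,1), one has the strict inequality 2(E(k) - K(k)) + k²·K(k) < 0. -/
open Real

/-!
Since `1 - k² sin² u = s(u)²` with `s(u) = √(1 - k² sin² u)`, the identity
`2 s - (2 - k²) / s = k² cos 2u / s` gives `2E - (2 - k²)K = k² ∫₀^{π/2} cos 2u / s(u) du`.
Folding `[0, π/2]` at `π/4` pairs `u` with `π/2 - u`: there `cos 2u` changes sign while `s(u)`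
becomes `√(1 - k² cos² u)`, which is smaller for `u < π/4`, so the negative half dominates.
-/

open intervalIntegral Set

theorem intervalIntegral.integral_eq_integral_add_comp_sub_left {E : Type*}
    [NormedAddCommGroup E] [NormedSpace ℝ E] {f : ℝ → E} {a b : ℝ}
    (hf : IntervalIntegrable f MeasureTheory.volume a b) :
    ∫ x in a..b, f x = ∫ x in a..(a + b) / 2, (f x + f (a + b - x)) := by
  set m := (a + b) / 2 with hm_def
  have hm : m ∈ uIcc a b := by
    rcases le_total a b with h | h
    · exact mem_uIcc_of_le (by linarith) (by linarith)
    · exact mem_uIcc_of_ge (by linarith) (by linarith)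
  have hfam : IntervalIntegrable f MeasureTheory.volume a m :=
    hf.mono_set (uIcc_subset_uIcc_left hm)
  have hfmb : IntervalIntegrable f MeasureTheory.volume m b :=
    hf.mono_set (uIcc_subset_uIcc_right hm)
  have hreflect : ∫ x in m..b, f x = ∫ x in a..m, f (a + b - x) := by
    rw [integral_comp_sub_left]
    congr 1 <;> ring
  have hreflect_int : IntervalIntegrable (fun x ↦ f (a + b - x)) MeasureTheory.volume a m := by
    simpa [m, show a + b - m = m by ring] using (hfmb.comp_sub_left (a + b)).symm
  rw [← integral_add_adjacent_intervals hfam hfmb, hreflect, integral_add hfam hreflect_int]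

lemma one_sub_sq_mul_pos {k t : ℝ} (hk : k ^ 2 < 1) (ht : t ≤ 1) : 0 < 1 - k ^ 2 * t := by
  nlinarith [sq_nonneg k]

lemma two_mul_sqrt_sub_div_sqrt {k u : ℝ} (h : 0 < 1 - k ^ 2 * sin u ^ 2) :
    2 * √(1 - k ^ 2 * sin u ^ 2) - (2 - k ^ 2) * (1 / √(1 - k ^ 2 * sin u ^ 2)) =
      k ^ 2 * (cos (2 * u) / √(1 - k ^ 2 * sin u ^ 2)) := by
  have := Real.sqrt_pos.mpr h
  field_simp
  rw [Real.sq_sqrt h.le, cos_two_mul, cos_sq']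
  ring

theorem two_mul_ellE_sub_mul_ellK {k : ℝ} (hk : k ^ 2 < 1) :
    2 * ellE k - (2 - k ^ 2) * ellK k =
      k ^ 2 * ∫ u in (0:ℝ)..(π/2), cos (2 * u) / √(1 - k ^ 2 * sin u ^ 2) := by
  have hpos (u : ℝ) : 0 < 1 - k ^ 2 * sin u ^ 2 := one_sub_sq_mul_pos hk (sin_sq_le_one u)
  have hs : Continuous fun u ↦ √(1 - k ^ 2 * sin u ^ 2) := by fun_prop
  have hs_inv : Continuous fun u ↦ 1 / √(1 - k ^ 2 * sin u ^ 2) :=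
    continuous_const.div hs fun u ↦ (Real.sqrt_pos.mpr (hpos u)).ne'
  rw [ellE, ellK, ← integral_const_mul, ← integral_const_mul, ← integral_const_mul,
    ← integral_sub ((hs.const_mul _).intervalIntegrable _ _)
      ((hs_inv.const_mul _).intervalIntegrable _ _)]
  exact integral_congr fun u _ ↦ two_mul_sqrt_sub_div_sqrt (hpos u)

lemma cos_two_mul_div_sqrt_add_reflect_neg {k u : ℝ} (hk0 : k ≠ 0) (hk : k ^ 2 < 1)
    (hu : u ∈ Ioo 0 (π / 4)) :
    cos (2 * u) / √(1 - k ^ 2 * sin u ^ 2) +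
      cos (2 * (π / 2 - u)) / √(1 - k ^ 2 * sin (π / 2 - u) ^ 2) < 0 := by
  obtain ⟨hu0, hu1⟩ := hu
  have hcos : 0 < cos (2 * u) := cos_pos_of_mem_Ioo ⟨by linarith [pi_pos], by linarith⟩
  have hsin_lt : sin u ^ 2 < cos u ^ 2 := by nlinarith [cos_sq' u, cos_two_mul u]
  have hc : 0 < 1 - k ^ 2 * cos u ^ 2 := one_sub_sq_mul_pos hk (cos_sq_le_one u)
  have hlt : √(1 - k ^ 2 * cos u ^ 2) < √(1 - k ^ 2 * sin u ^ 2) :=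
    Real.sqrt_lt_sqrt hc.le (by nlinarith [pow_pos (abs_pos.mpr hk0) 2, sq_abs k])
  rw [sin_pi_div_two_sub, show 2 * (π / 2 - u) = π - 2 * u by ring, cos_pi_sub, neg_div,
    ← sub_eq_add_neg, sub_neg]
  exact div_lt_div_of_pos_left hcos (Real.sqrt_pos.mpr hc) hlt

theorem integral_cos_two_mul_div_sqrt_neg {k : ℝ} (hk0 : k ≠ 0) (hk : k ^ 2 < 1) :
    ∫ u in (0:ℝ)..(π/2), cos (2 * u) / √(1 - k ^ 2 * sin u ^ 2) < 0 := by
  have hpos (u : ℝ) : 0 < 1 - k ^ 2 * sin u ^ 2 := one_sub_sq_mul_pos hk (sin_sq_le_one u)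
  have hF : Continuous fun u ↦ cos (2 * u) / √(1 - k ^ 2 * sin u ^ 2) :=
    (by fun_prop : Continuous fun u ↦ cos (2 * u)).div (by fun_prop)
      fun u ↦ (Real.sqrt_pos.mpr (hpos u)).ne'
  rw [integral_eq_integral_add_comp_sub_left (hF.intervalIntegrable _ _), zero_add,
    show π / 2 / 2 = π / 4 by ring]
  have hpos_int := intervalIntegral_pos_of_pos_on
    (f := fun u ↦ -(cos (2 * u) / √(1 - k ^ 2 * sin u ^ 2) +
      cos (2 * (π / 2 - u)) / √(1 - k ^ 2 * sin (π / 2 - u) ^ 2)))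
    ((hF.add (hF.comp (continuous_sub_left (π / 2)))).neg.intervalIntegrable 0 (π / 4))
    (fun u hu ↦ neg_pos.mpr (cos_two_mul_div_sqrt_add_reflect_neg hk0 hk hu))
    (by positivity)
  rw [integral_neg] at hpos_int
  exact neg_pos.mp hpos_int

theorem stmt_3 (k : ℝ) (hk : k ∈ Set.Ioo (0:ℝ) 1) :
    2 * (ellE k - ellK k) + k^2 * ellK k < 0 := by
  obtain ⟨hk0, hk1⟩ := hk
  have hk_sq : k ^ 2 < 1 := by nlinarith
  calc 2 * (ellE k - ellK k) + k ^ 2 * ellK k = 2 * ellE k - (2 - k ^ 2) * ellK k := by ring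
    _ = k ^ 2 * ∫ u in (0:ℝ)..(π/2), cos (2 * u) / √(1 - k ^ 2 * sin u ^ 2) :=
      two_mul_ellE_sub_mul_ellK hk_sq
    _ < 0 := mul_neg_of_pos_of_neg (by positivity) (integral_cos_two_mul_div_sqrt_neg hk0.ne' hk_sq)
end

section
/- For every k ∈ (0,1), the function K : (0,1) → ℝ, K(k) = ∫_0^{π/2} (1 - k² sin²u)^{-1/2} du, is differentiable at k with derivative K'(k) = E(k)/(k(1-k²)) - K(k)/k. -/
open Real

/-! With `Δ(u) = √(1 - k² sin² u)`, differentiating under the integral sign gives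
`K'(k) = ∫ k sin² u / Δ³`; for `|x| ≤ m < 1` the integrand's `x`-derivative is dominated by
`(1 - m²)^(-3/2)`. Pointwise, `k sin² u / Δ³` equals
`Δ / (k (1 - k²)) - 1 / (k Δ) - k / (1 - k²) · d/du (sin u cos u / Δ)`,
and the last term integrates to zero over `[0, π/2]`. -/

open MeasureTheory intervalIntegral

lemma one_sub_sq_mul_pos_s4 {x s : ℝ} (hx : |x| < 1) (hs1 : s ≤ 1) :
    0 < 1 - x ^ 2 * s := by
  have : x ^ 2 < 1 := (sq_lt_one_iff_abs_lt_one x).2 hx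
  nlinarith

lemma hasDerivAt_one_div_sqrt_one_sub_sq_mul {x s : ℝ} (h : 0 < 1 - x ^ 2 * s) :
    HasDerivAt (fun y => 1 / √(1 - y ^ 2 * s)) (x * s / √(1 - x ^ 2 * s) ^ 3) x := by
  have hinner : HasDerivAt (fun y => 1 - y ^ 2 * s) (-(2 * x * s)) x := by
    simpa using ((hasDerivAt_pow 2 x).mul_const s).const_sub 1
  refine ((hasDerivAt_const x 1).div (hinner.sqrt h.ne') (sqrt_pos.2 h).ne').congr_deriv ?_
  field_simp
  ring

lemma norm_mul_div_sqrt_one_sub_sq_mul_pow_three_le {y s m : ℝ} (hym : |y| ≤ m) (hm : m < 1)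
    (hs0 : 0 ≤ s) (hs1 : s ≤ 1) :
    ‖y * s / √(1 - y ^ 2 * s) ^ 3‖ ≤ 1 / √(1 - m ^ 2) ^ 3 := by
  have hy : y ^ 2 ≤ m ^ 2 := sq_le_sq' (abs_le.1 hym).1 (abs_le.1 hym).2
  have hm2 : 0 < 1 - m ^ 2 := by nlinarith [abs_nonneg y]
  have hsqrt : √(1 - m ^ 2) ≤ √(1 - y ^ 2 * s) := sqrt_le_sqrt (by nlinarith [sq_nonneg y])
  have hnum : |y| * s ≤ 1 := by nlinarith [abs_nonneg y]
  rw [norm_div, norm_mul, norm_pow, Real.norm_eq_abs, Real.norm_of_nonneg hs0,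
    Real.norm_of_nonneg (sqrt_nonneg _)]
  exact div_le_div₀ zero_le_one hnum (by positivity) (pow_le_pow_left₀ (sqrt_nonneg _) hsqrt 3)

theorem hasDerivAt_integral_one_div_sqrt_one_sub_sq_mul {g : ℝ → ℝ} (hg : Continuous g)
    (hg0 : ∀ u, 0 ≤ g u) (hg1 : ∀ u, g u ≤ 1) (a b : ℝ) {x : ℝ} (hx : |x| < 1) :
    HasDerivAt (fun y => ∫ u in a..b, 1 / √(1 - y ^ 2 * g u))
      (∫ u in a..b, x * g u / √(1 - x ^ 2 * g u) ^ 3) x := by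
  set m := (1 + |x|) / 2 with hm_def
  have hm : m < 1 := by rw [hm_def]; linarith
  have hxm : x ∈ Metric.ball 0 m := by
    rw [mem_ball_zero_iff, Real.norm_eq_abs, hm_def]; linarith
  have hball : ∀ y ∈ Metric.ball (0 : ℝ) m, |y| < 1 := fun y hy => by
    rw [mem_ball_zero_iff, Real.norm_eq_abs] at hy; linarith
  have hpos : ∀ y, |y| < 1 → ∀ u, 0 < 1 - y ^ 2 * g u := fun y hy u =>
    one_sub_sq_mul_pos_s4 hy (hg1 u)
  have hcont : ∀ y, |y| < 1 → Continuous fun u => 1 / √(1 - y ^ 2 * g u) := fun y hy =>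
    continuous_const.div (by fun_prop) fun u => (sqrt_pos.2 (hpos y hy u)).ne'
  have hcont' : Continuous fun u => x * g u / √(1 - x ^ 2 * g u) ^ 3 :=
    (by fun_prop : Continuous _).div (by fun_prop) fun u =>
      pow_ne_zero _ (sqrt_pos.2 (hpos x hx u)).ne'
  refine (hasDerivAt_integral_of_dominated_loc_of_deriv_le
    (F' := fun y u => y * g u / √(1 - y ^ 2 * g u) ^ 3) (bound := fun _ => 1 / √(1 - m ^ 2) ^ 3)
    (Metric.isOpen_ball.mem_nhds hxm) ?_ ((hcont x hx).intervalIntegrable _ _)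
    hcont'.aestronglyMeasurable.restrict ?_ intervalIntegrable_const ?_).2
  · filter_upwards [Metric.isOpen_ball.mem_nhds hxm] with y hy
    exact (hcont y (hball y hy)).aestronglyMeasurable
  · refine ae_of_all _ fun u _ y hy => ?_
    rw [mem_ball_zero_iff, Real.norm_eq_abs] at hy
    exact norm_mul_div_sqrt_one_sub_sq_mul_pow_three_le hy.le hm (hg0 u) (hg1 u)
  · exact ae_of_all _ fun u _ y hy =>
      hasDerivAt_one_div_sqrt_one_sub_sq_mul (hpos y (hball y hy) u)

lemma hasDerivAt_sin_mul_cos_div_sqrt {k u : ℝ} (h : 0 < 1 - k ^ 2 * sin u ^ 2) :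
    HasDerivAt (fun u => sin u * cos u / √(1 - k ^ 2 * sin u ^ 2))
      ((1 - sin u ^ 2) / √(1 - k ^ 2 * sin u ^ 2) ^ 3 - sin u ^ 2 / √(1 - k ^ 2 * sin u ^ 2))
      u := by
  have hinner :
      HasDerivAt (fun u => 1 - k ^ 2 * sin u ^ 2) (-(k ^ 2 * (2 * sin u * cos u))) u := by
    simpa using (((hasDerivAt_sin u).pow 2).const_mul (k ^ 2)).const_sub 1
  refine (((hasDerivAt_sin u).mul (hasDerivAt_cos u)).div (hinner.sqrt h.ne')
    (sqrt_pos.2 h).ne').congr_deriv ?_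
  have hcos : cos u ^ 2 = 1 - sin u ^ 2 := cos_sq' u
  have hsq : √(1 - k ^ 2 * sin u ^ 2) ^ 2 = 1 - k ^ 2 * sin u ^ 2 := sq_sqrt h.le
  have ht : √(1 - k ^ 2 * sin u ^ 2) ≠ 0 := (sqrt_pos.2 h).ne'
  set t := √(1 - k ^ 2 * sin u ^ 2)
  simp only [Pi.mul_apply]
  field_simp
  rw [hsq]
  linear_combination hcos

lemma mul_div_pow_three_eq {k s t : ℝ} (hk0 : k ≠ 0) (hk1 : 1 - k ^ 2 ≠ 0) (ht : t ≠ 0)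
    (hts : t ^ 2 = 1 - k ^ 2 * s) :
    k * s / t ^ 3 = (k * (1 - k ^ 2))⁻¹ * t - k⁻¹ * (1 / t)
      - k / (1 - k ^ 2) * ((1 - s) / t ^ 3 - s / t) := by
  field_simp
  linear_combination -(t ^ 2 + k ^ 2) * hts

lemma integral_mul_sin_sq_div_sqrt_pow_three {k : ℝ} (hk0 : k ≠ 0) (hk : |k| < 1) :
    ∫ u in (0 : ℝ)..π / 2, k * sin u ^ 2 / √(1 - k ^ 2 * sin u ^ 2) ^ 3
      = ellE k / (k * (1 - k ^ 2)) - ellK k / k := by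
  have hpos (u : ℝ) : 0 < 1 - k ^ 2 * sin u ^ 2 := one_sub_sq_mul_pos_s4 hk (sin_sq_le_one u)
  have hne (u : ℝ) : √(1 - k ^ 2 * sin u ^ 2) ≠ 0 := (sqrt_pos.2 (hpos u)).ne'
  have hk1 : 1 - k ^ 2 ≠ 0 := by
    have := (sq_lt_one_iff_abs_lt_one k).2 hk
    linarith
  have hE : IntervalIntegrable (fun u => √(1 - k ^ 2 * sin u ^ 2)) volume 0 (π / 2) :=
    (by fun_prop : Continuous _).intervalIntegrable _ _
  have hK : IntervalIntegrable (fun u => 1 / √(1 - k ^ 2 * sin u ^ 2)) volume 0 (π / 2) :=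
    (by fun_prop (disch := exact hne) : Continuous _).intervalIntegrable _ _
  have hG : IntervalIntegrable (fun u => (1 - sin u ^ 2) / √(1 - k ^ 2 * sin u ^ 2) ^ 3
      - sin u ^ 2 / √(1 - k ^ 2 * sin u ^ 2)) volume 0 (π / 2) :=
    (by fun_prop (disch := simp [hne]) : Continuous _).intervalIntegrable _ _
  have hboundary : ∫ u in (0 : ℝ)..π / 2, ((1 - sin u ^ 2) / √(1 - k ^ 2 * sin u ^ 2) ^ 3
      - sin u ^ 2 / √(1 - k ^ 2 * sin u ^ 2)) = 0 := by
    rw [integral_eq_sub_of_hasDerivAt (fun u _ => hasDerivAt_sin_mul_cos_div_sqrt (hpos u)) hG]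
    simp
  rw [integral_congr fun u _ => mul_div_pow_three_eq hk0 hk1 (hne u) (sq_sqrt (hpos u).le),
    integral_sub ((hE.const_mul _).sub (hK.const_mul _)) (hG.const_mul _),
    integral_sub (hE.const_mul _) (hK.const_mul _), intervalIntegral.integral_const_mul,
    intervalIntegral.integral_const_mul, intervalIntegral.integral_const_mul, hboundary, ellE, ellK]
  ring

theorem stmt_4 (k : ℝ) (hk : k ∈ Set.Ioo (0:ℝ) 1) :
    HasDerivAt ellK (ellE k / (k * (1 - k^2)) - ellK k / k) k := by
  have hk1 : |k| < 1 := abs_lt.2 ⟨by linarith [hk.1], hk.2⟩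
  rw [← integral_mul_sin_sq_div_sqrt_pow_three hk.1.ne' hk1]
  exact hasDerivAt_integral_one_div_sqrt_one_sub_sq_mul (by fun_prop) (fun u => sq_nonneg _)
    sin_sq_le_one 0 (π / 2) hk1
end

section
/- Let p, q : ℝ → ℝ be continuous, let L > 0, and let w₁, w₂ : ℝ → ℝ be twice continuously differentiable solutions of the linear ODE v'' + p·v' + q·v = 0 on ℝ. Assume that w₁ is odd, L-periodic, and not identically zero, and that w₂ is even and not L-periodic. Then every twice continuously differentiable solution v of v'' + p·v' + q·v = 0 on ℝ which is both even and L-periodic is identically zero. -/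
/-! Even functions have vanishing derivative at `0`, so an even solution `v` and `w₂` both have
`v'(0) = w₂'(0) = 0`. If `v(0) ≠ 0`, uniqueness for the initial value problem makes `w₂` a
constant multiple of `v`, hence `L`-periodic. So `v(0) = v'(0) = 0`, and uniqueness again gives
`v = 0`. -/

open Set

theorem ODE_solution_unique_of_linear {E : Type*} [NormedAddCommGroup E] [NormedSpace ℝ E]
    {A : ℝ → E →L[ℝ] E} (hA : Continuous A) {f g : ℝ → E} {t₀ : ℝ}
    (hf : ∀ t, HasDerivAt f (A t (f t)) t) (hg : ∀ t, HasDerivAt g (A t (g t)) t)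
    (h : f t₀ = g t₀) : f = g := by
  funext t
  obtain ⟨a, b, ht, ht₀⟩ : ∃ a b, t ∈ Ioo a b ∧ t₀ ∈ Ioo a b :=
    ⟨min t t₀ - 1, max t t₀ + 1, by grind, by grind⟩
  obtain ⟨C, hC⟩ := isCompact_Icc.exists_bound_of_continuousOn (hA.continuousOn (s := Icc a b))
  have hlip : ∀ s ∈ Ioo a b, LipschitzOnWith C.toNNReal (A s) univ := fun s hs =>
    (ContinuousLinearMap.opNorm_le_iff_lipschitz.mp
      ((hC s (Ioo_subset_Icc_self hs)).trans (Real.le_coe_toNNReal C))).lipschitzOnWith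
  exact ODE_solution_unique_of_mem_Ioo hlip ht₀ (fun s _ => ⟨hf s, trivial⟩)
    (fun s _ => ⟨hg s, trivial⟩) h ht

theorem Function.Even.deriv_zero {𝕜 F : Type*} [NontriviallyNormedField 𝕜] [CharZero 𝕜]
    [NormedAddCommGroup F] [NormedSpace 𝕜 F] {f : 𝕜 → F} (hf : f.Even) : deriv f 0 = 0 := by
  have h := deriv_comp_neg f (0 : 𝕜)
  rw [funext hf, neg_zero] at h
  have h2 : (2 : 𝕜) • deriv f 0 = 0 := by
    rw [two_smul]
    nth_rw 1 [h]
    exact neg_add_cancel _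
  exact (smul_eq_zero.mp h2).resolve_left two_ne_zero

/-- The first-order system `(v, v')' = companion p q t (v, v')` of `v'' + p v' + q v = 0`, written
through `inl`/`inr` so that `t` enters only through scalar multiples of fixed maps. -/
noncomputable def companion (p q : ℝ → ℝ) (t : ℝ) : ℝ × ℝ →L[ℝ] ℝ × ℝ :=
  .inl ℝ ℝ ℝ ∘L .snd ℝ ℝ ℝ - q t • (.inr ℝ ℝ ℝ ∘L .fst ℝ ℝ ℝ)
    - p t • (.inr ℝ ℝ ℝ ∘L .snd ℝ ℝ ℝ)

theorem companion_apply (p q : ℝ → ℝ) (t : ℝ) (x : ℝ × ℝ) :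
    companion p q t x = (x.2, -q t * x.1 - p t * x.2) := by
  ext <;> simp [companion]

theorem continuous_companion {p q : ℝ → ℝ} (hp : Continuous p) (hq : Continuous q) :
    Continuous (companion p q) := by
  unfold companion
  fun_prop

structure IsLinearODESolution (p q u : ℝ → ℝ) : Prop where
  differentiable : Differentiable ℝ u
  differentiable_deriv : Differentiable ℝ (deriv u)
  ode : ∀ t, deriv (deriv u) t + p t * deriv u t + q t * u t = 0

namespace IsLinearODESolution

variable {p q u w : ℝ → ℝ}

theorem of_contDiff (hu : ContDiff ℝ 2 u)
    (hode : ∀ t, deriv (deriv u) t + p t * deriv u t + q t * u t = 0) :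
    IsLinearODESolution p q u where
  differentiable := hu.differentiable two_ne_zero
  differentiable_deriv := hu.differentiable_deriv_two
  ode := hode

theorem zero : IsLinearODESolution p q 0 where
  differentiable := differentiable_const 0
  differentiable_deriv := by simp
  ode := by simp

theorem const_smul (hu : IsLinearODESolution p q u) (c : ℝ) :
    IsLinearODESolution p q (c • u) := by
  have hderiv : ∀ f : ℝ → ℝ, deriv (c • f) = c • deriv f :=
    fun f => funext fun _ => deriv_const_smul_field c f
  refine ⟨hu.differentiable.const_smul c, ?_, fun t => ?_⟩
  · rw [hderiv]
    exact hu.differentiable_deriv.const_smul c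
  · simp only [hderiv, Pi.smul_apply, smul_eq_mul]
    linear_combination c * hu.ode t

theorem hasDerivAt_phase (hu : IsLinearODESolution p q u) (t : ℝ) :
    HasDerivAt (fun t => (u t, deriv u t)) (companion p q t (u t, deriv u t)) t := by
  convert (hu.differentiable t).hasDerivAt.prodMk (hu.differentiable_deriv t).hasDerivAt using 1
  rw [companion_apply, Prod.mk.injEq]
  exact ⟨rfl, by linear_combination -hu.ode t⟩

theorem eq_of_eq_of_deriv_eq (hp : Continuous p) (hq : Continuous q)
    (hu : IsLinearODESolution p q u) (hw : IsLinearODESolution p q w) {t₀ : ℝ}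
    (h₀ : u t₀ = w t₀) (h₁ : deriv u t₀ = deriv w t₀) : u = w := by
  have h := ODE_solution_unique_of_linear (continuous_companion hp hq) hu.hasDerivAt_phase
    hw.hasDerivAt_phase (t₀ := t₀) (Prod.ext h₀ h₁)
  exact funext fun t => congrArg Prod.fst (congrFun h t)

end IsLinearODESolution

theorem stmt_13_general (p q : ℝ → ℝ) (hp : Continuous p) (hq : Continuous q)
    (L : ℝ) (w₂ : ℝ → ℝ)
    (hw₂C : ContDiff ℝ 2 w₂)
    (hw₂ : ∀ z : ℝ, deriv (deriv w₂) z + p z * deriv w₂ z + q z * w₂ z = 0)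
    (hw₂even : ∀ z : ℝ, w₂ (-z) = w₂ z)
    (hw₂nper : ¬ ∀ z : ℝ, w₂ (z + L) = w₂ z) :
    ∀ v : ℝ → ℝ, ContDiff ℝ 2 v →
      (∀ z : ℝ, deriv (deriv v) z + p z * deriv v z + q z * v z = 0) →
      (∀ z : ℝ, v (-z) = v z) → (∀ z : ℝ, v (z + L) = v z) →
      v = 0 := by
  intro v hvC hvode hveven hvper
  have hv := IsLinearODESolution.of_contDiff hvC hvode
  have hw := IsLinearODESolution.of_contDiff hw₂C hw₂
  have hv₀ : v 0 = 0 := by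
    by_contra hv₀
    have hw₂v : w₂ = (w₂ 0 / v 0) • v :=
      hw.eq_of_eq_of_deriv_eq hp hq (hv.const_smul _) (t₀ := 0) (by simp [hv₀])
        (by rw [Function.Even.deriv_zero hw₂even, (Function.Even.const_smul hveven _).deriv_zero])
    exact hw₂nper fun z => by rw [hw₂v]; simp [hvper z]
  exact hv.eq_of_eq_of_deriv_eq hp hq .zero (t₀ := 0) hv₀
    (by simp [Function.Even.deriv_zero hveven])

theorem stmt_13 (p q : ℝ → ℝ) (hp : Continuous p) (hq : Continuous q)
    (L : ℝ) (hL : 0 < L) (w₁ w₂ : ℝ → ℝ)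
    (hw₁C : ContDiff ℝ 2 w₁) (hw₂C : ContDiff ℝ 2 w₂)
    (hw₁ : ∀ z : ℝ, deriv (deriv w₁) z + p z * deriv w₁ z + q z * w₁ z = 0)
    (hw₂ : ∀ z : ℝ, deriv (deriv w₂) z + p z * deriv w₂ z + q z * w₂ z = 0)
    (hw₁odd : ∀ z : ℝ, w₁ (-z) = -w₁ z)
    (hw₁per : ∀ z : ℝ, w₁ (z + L) = w₁ z)
    (hw₁ne : w₁ ≠ 0)
    (hw₂even : ∀ z : ℝ, w₂ (-z) = w₂ z)
    (hw₂nper : ¬ ∀ z : ℝ, w₂ (z + L) = w₂ z) :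
    ∀ v : ℝ → ℝ, ContDiff ℝ 2 v →
      (∀ z : ℝ, deriv (deriv v) z + p z * deriv v z + q z * v z = 0) →
      (∀ z : ℝ, v (-z) = v z) → (∀ z : ℝ, v (z + L) = v z) →
      v = 0 :=
  stmt_13_general p q hp hq L w₂ hw₂C hw₂ hw₂even hw₂nper
end

section
/- Let η : ℝ × ℝ → ℝ, (s,z) ↦ η(s,z), be smooth with η(s,z) > 0 for all (s,z), and let κ : ℝ → ℝ be differentiable at 0. Suppose that for all s and z, ∂_z²η(s,z)/(1 + (∂_zη(s,z))²)^{3/2} - 1/(η(s,z)·√(1 + (∂_zη(s,z))²)) = κ(s). Set η̄ := η(0,·) and w(z) := ∂_s η(0,z). Then for all z ∈ ℝ, w''(z) + ( η̄'(z)/η̄(z) - 3η̄''(z)η̄'(z)/(1 + η̄'(z)²) )·w'(z) + ((1 + η̄'(z)²)/η̄(z)²)·w(z) = (1 + η̄'(z)²)^{3/2}·κ'(0). -/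
open Real

private lemma hasDerivAt_snd {h : ℝ × ℝ → ℝ} (hh : Differentiable ℝ h) (s z : ℝ) :
    HasDerivAt (fun z => h (s, z)) (fderiv ℝ h (s, z) (0, 1)) z :=
  (hh (s, z)).hasFDerivAt.comp_hasDerivAt z ((hasDerivAt_const z s).prodMk (hasDerivAt_id z))

private lemma hasDerivAt_fst {h : ℝ × ℝ → ℝ} (hh : Differentiable ℝ h) (s z : ℝ) :
    HasDerivAt (fun s => h (s, z)) (fderiv ℝ h (s, z) (1, 0)) s :=
  (hh (s, z)).hasFDerivAt.comp_hasDerivAt s ((hasDerivAt_id s).prodMk (hasDerivAt_const s z))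

private lemma contDiff_pd {h : ℝ × ℝ → ℝ} (hh : ContDiff ℝ (⊤ : ℕ∞) h) (v : ℝ × ℝ) :
    ContDiff ℝ (⊤ : ℕ∞) (fun p => fderiv ℝ h p v) :=
  (hh.fderiv_right (by simp)).clm_apply contDiff_const

private lemma swap_pd {h : ℝ × ℝ → ℝ} (hh : ContDiff ℝ (⊤ : ℕ∞) h) (p u v : ℝ × ℝ) :
    fderiv ℝ (fun q => fderiv ℝ h q u) p v = fderiv ℝ (fun q => fderiv ℝ h q v) p u := by
  have hf : ∀ y, HasFDerivAt h (fderiv ℝ h y) y :=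
    fun y => (hh.differentiable (by simp) y).hasFDerivAt
  have hf2 : HasFDerivAt (fderiv ℝ h) (fderiv ℝ (fderiv ℝ h) p) p :=
    ((hh.fderiv_right (m := (⊤ : ℕ∞)) (by simp)).differentiable (by simp) p).hasFDerivAt
  have key : ∀ w : ℝ × ℝ, fderiv ℝ (fun q => fderiv ℝ h q w) p
      = (ContinuousLinearMap.apply ℝ ℝ w).comp (fderiv ℝ (fderiv ℝ h) p) := by
    intro w
    exact ((ContinuousLinearMap.apply ℝ ℝ w).hasFDerivAt.comp p hf2).fderiv
  rw [key u, key v]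
  exact second_derivative_symmetric hf hf2 v u

theorem stmt_15 (η : ℝ × ℝ → ℝ) (hη : ContDiff ℝ (⊤ : ℕ∞) η)
    (hpos : ∀ s z : ℝ, 0 < η (s, z))
    (κ : ℝ → ℝ) (hκ : DifferentiableAt ℝ κ 0)
    (hcmc : ∀ s z : ℝ,
      deriv (deriv (fun z => η (s, z))) z
          / (1 + deriv (fun z => η (s, z)) z ^ 2) ^ ((3:ℝ)/2)
        - 1 / (η (s, z) * Real.sqrt (1 + deriv (fun z => η (s, z)) z ^ 2)) = κ s) :
    ∀ z : ℝ,
      deriv (deriv (fun z => deriv (fun s => η (s, z)) 0)) z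
        + (deriv (fun z => η (0, z)) z / η (0, z)
            - 3 * deriv (deriv (fun z => η (0, z))) z * deriv (fun z => η (0, z)) z
              / (1 + deriv (fun z => η (0, z)) z ^ 2))
          * deriv (fun z => deriv (fun s => η (s, z)) 0) z
        + ((1 + deriv (fun z => η (0, z)) z ^ 2) / η (0, z) ^ 2)
          * deriv (fun s => η (s, z)) 0
      = (1 + deriv (fun z => η (0, z)) z ^ 2) ^ ((3:ℝ)/2) * deriv κ 0 := by
  -- abbreviations for partial derivatives
  set g1 : ℝ × ℝ → ℝ := fun p => fderiv ℝ η p (0, 1) with hg1def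
  set g2 : ℝ × ℝ → ℝ := fun p => fderiv ℝ g1 p (0, 1) with hg2def
  set gs : ℝ × ℝ → ℝ := fun p => fderiv ℝ η p (1, 0) with hgsdef
  set q1 : ℝ × ℝ → ℝ := fun p => fderiv ℝ gs p (0, 1) with hq1def
  set q2 : ℝ × ℝ → ℝ := fun p => fderiv ℝ q1 p (0, 1) with hq2def
  have hg1 : ContDiff ℝ (⊤ : ℕ∞) g1 := contDiff_pd hη _
  have hg2 : ContDiff ℝ (⊤ : ℕ∞) g2 := contDiff_pd hg1 _
  have hgs : ContDiff ℝ (⊤ : ℕ∞) gs := contDiff_pd hη _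
  have hq1 : ContDiff ℝ (⊤ : ℕ∞) q1 := contDiff_pd hgs _
  have hq2 : ContDiff ℝ (⊤ : ℕ∞) q2 := contDiff_pd hq1 _
  have hηd : Differentiable ℝ η := hη.differentiable (by simp)
  -- rewriting first derivatives in z
  have e1 : ∀ s : ℝ, deriv (fun z => η (s, z)) = fun z => g1 (s, z) := by
    intro s; funext z; exact (hasDerivAt_snd hηd s z).deriv
  have e2 : ∀ s : ℝ, deriv (deriv (fun z => η (s, z))) = fun z => g2 (s, z) := by
    intro s; rw [e1 s]; funext z
    exact (hasDerivAt_snd (hg1.differentiable (by simp)) s z).deriv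
  have e3 : (fun z : ℝ => deriv (fun s => η (s, z)) 0) = fun z => gs (0, z) := by
    funext z; exact (hasDerivAt_fst hηd 0 z).deriv
  have e4 : deriv (fun z => gs (0, z)) = fun z => q1 (0, z) := by
    funext z; exact (hasDerivAt_snd (hgs.differentiable (by simp)) 0 z).deriv
  intro z
  -- mixed partials: s-derivatives at s = 0
  have hC : HasDerivAt (fun s => η (s, z)) (gs (0, z)) 0 := hasDerivAt_fst hηd 0 z
  have hB : HasDerivAt (fun s => g1 (s, z)) (q1 (0, z)) 0 := by
    have h := hasDerivAt_fst (hg1.differentiable (by simp)) 0 z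
    rwa [show fderiv ℝ g1 (0, z) (1, 0) = q1 (0, z) from swap_pd hη (0, z) (0, 1) (1, 0)] at h
  have hswap1 : (fun q => fderiv ℝ g1 q (1, 0)) = q1 := by
    funext q; exact swap_pd hη q (0, 1) (1, 0)
  have hA : HasDerivAt (fun s => g2 (s, z)) (q2 (0, z)) 0 := by
    have h := hasDerivAt_fst (hg2.differentiable (by simp)) 0 z
    have he : fderiv ℝ g2 (0, z) (1, 0) = q2 (0, z) := by
      rw [hg2def, swap_pd hg1 (0, z) (0, 1) (1, 0), hswap1]
    rwa [he] at h
  have hCpos : 0 < η (0, z) := hpos 0 z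
  have hu : (0:ℝ) < 1 + g1 (0, z) ^ 2 := by positivity
  -- derivative of the curvature expression in s at 0
  have h1 : HasDerivAt (fun s => 1 + g1 (s, z) ^ 2)
      ((2:ℕ) * g1 (0, z) ^ (2 - 1) * q1 (0, z)) 0 := (hB.pow 2).const_add 1
  have h2 := h1.rpow_const (p := (3:ℝ)/2) (Or.inr (by norm_num))
  have hne32 : (1 + g1 (0, z) ^ 2) ^ ((3:ℝ)/2) ≠ 0 := by positivity
  have h3 := hA.div h2 hne32
  have h4 := h1.sqrt hu.ne'
  have h5 := hC.mul h4
  have hCtne : η (0, z) * Real.sqrt (1 + g1 (0, z) ^ 2) ≠ 0 := by positivity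
  have h6 := (hasDerivAt_const (0:ℝ) (1:ℝ)).div h5 hCtne
  have htot := h3.sub h6
  -- the curvature expression equals κ
  have hcmc' : (fun s => g2 (s, z) / (1 + g1 (s, z) ^ 2) ^ ((3:ℝ)/2)
      - 1 / (η (s, z) * Real.sqrt (1 + g1 (s, z) ^ 2))) = κ := by
    funext s
    have h := hcmc s z
    rw [e2 s] at h
    simp only [e1 s] at h
    exact h
  rw [show ((fun s => g2 (s, z)) / fun y => (1 + g1 (y, z) ^ 2) ^ ((3:ℝ)/2)) - (fun _ => (1:ℝ)) / ((fun s => η (s, z)) * fun y => Real.sqrt (1 + g1 (y, z) ^ 2)) = κ from hcmc'] at htot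
  simp only [Pi.mul_apply] at htot
  have hκd := htot.deriv
  -- rewrite the goal
  rw [e2 0]
  simp only [e3, e4, e1 0]
  rw [show deriv (fun z => q1 (0, z)) z = q2 (0, z) from
      (hasDerivAt_snd (hq1.differentiable (by simp)) 0 z).deriv,
    show deriv (fun s => η (s, z)) 0 = gs (0, z) from hC.deriv, hκd]
  -- pure algebra
  set B := g1 (0, z) with hBdef
  set A := g2 (0, z) with hAdef
  set C := η (0, z) with hCdef
  set W := gs (0, z) with hWdef
  set W1 := q1 (0, z) with hW1def
  set W2 := q2 (0, z) with hW2def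
  set t := Real.sqrt (1 + B ^ 2) with htdef
  have htpos : 0 < t := Real.sqrt_pos.mpr hu
  have ht2 : t ^ 2 = 1 + B ^ 2 := Real.sq_sqrt hu.le
  have h32 : (1 + B ^ 2) ^ ((3:ℝ)/2) = t ^ 3 := by
    rw [show ((3:ℝ)/2) = (1/2) * ((3:ℕ):ℝ) by norm_num, Real.rpow_mul hu.le,
      ← Real.sqrt_eq_rpow, ← htdef, Real.rpow_natCast]
  have h12 : (1 + B ^ 2) ^ ((3:ℝ)/2 - 1) = t := by
    rw [show ((3:ℝ)/2 - 1) = 1/2 by norm_num, ← Real.sqrt_eq_rpow, ← htdef]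
  rw [h32, h12, ← ht2]
  have htne : t ≠ 0 := htpos.ne'
  have hCne : C ≠ 0 := hCpos.ne'
  push_cast
  field_simp
  ring
end

section
/- Let γ : ℝ → ℝ be continuously differentiable with γ' bounded, and let F : ℝ → ℝ be twice continuously differentiable with F(0) = 0 and with (F·F')' bounded. Then for every λ ∈ ℝ and every d > 0 there exists a unique function ψ : [0,d] → ℝ, continuously differentiable on [0,d] and twice continuously differentiable on (0,d], such that ψ(0) = λ, ψ'(0) = 0, and ψ''(r) + (3/r)·ψ'(r) = -γ(r²ψ(r)) - (F·F')(r²ψ(r))/r² for all r ∈ (0,d]. -/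
open Set

/-!
With `h = F F'` the equation reads `(r³ ψ')' = -(r³ γ(r²ψ) + r h(r²ψ))`, so together with
`ψ(0) = λ`, `ψ'(0) = 0` it is equivalent to the fixed-point equation
`ψ(r) = λ + ∫₀ʳ s⁻³ ∫₀ˢ -(t³ γ(t²ψ) + t h(t²ψ)) dt ds` on `C([0, d])`.
Since `γ` and `h` are Lipschitz and `h(0) = 0`, the inner integrand is `O(t³)`, so the inner
integral is `O(s⁴)` and the singular factor `s⁻³` does no harm. The same estimate applied to
differences shows that a difference bounded by `B t^(2n)` is mapped to one bounded by
`L B t^(2n+2) / (4(n+1))`, where `L = Lip(γ) d² + Lip(h)`; so the `n`-th iterate of the map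
is Lipschitz with constant `(L d² / 4)ⁿ / n!`, and some iterate is a contraction.
-/

open MeasureTheory intervalIntegral Filter Topology Function
open scoped Nat

theorem lipschitzWith_of_abs_deriv_le {f : ℝ → ℝ} (hf : Differentiable ℝ f) {C : ℝ}
    (hC : ∀ x, |deriv f x| ≤ C) : LipschitzWith C.toNNReal f :=
  lipschitzWith_of_nnnorm_deriv_le hf fun x => by
    rw [← NNReal.coe_le_coe, coe_nnnorm, Real.norm_eq_abs, Real.coe_toNNReal']
    exact (hC x).trans (le_max_left _ _)

theorem existsUnique_isFixedPt_of_dist_iterate_le {X : Type*} [MetricSpace X] [CompleteSpace X]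
    [Nonempty X] {f : X → X} {K : ℝ} (hK : 0 ≤ K)
    (hf : ∀ n x y, dist (f^[n] x) (f^[n] y) ≤ K ^ n / n ! * dist x y) :
    ∃! x, IsFixedPt f x := by
  obtain ⟨n, hn⟩ := (FloorSemiring.tendsto_pow_div_factorial_atTop K).eventually
    (gt_mem_nhds zero_lt_one) |>.exists
  have hc : ContractingWith ⟨K ^ n / n !, by positivity⟩ f^[n] :=
    ⟨by exact NNReal.coe_lt_coe.1 hn, LipschitzWith.of_dist_le_mul (hf n)⟩
  exact ⟨_, hc.isFixedPt_fixedPoint_iterate, fun y hy => hc.fixedPoint_unique (hy.iterate n)⟩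

theorem hasDerivAt_derivWithin_of_contDiffOn {f : ℝ → ℝ} {s u : Set ℝ} {x : ℝ}
    (hf : ContDiffOn ℝ 2 f u) (hu : u ∈ 𝓝 x) (hs : s ∈ 𝓝 x) :
    HasDerivAt (derivWithin f s) (derivWithin (derivWithin f s) s x) x := by
  have hf' : DifferentiableAt ℝ (deriv f) x :=
    (((hf.mono interior_subset).deriv_of_isOpen isOpen_interior (m := 1)
      (by norm_num)).differentiableOn one_ne_zero).differentiableAt (interior_mem_nhds.2 hu)
  have heq : derivWithin f s =ᶠ[𝓝 x] deriv f := by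
    filter_upwards [eventually_mem_nhds_iff.2 hs] with y hy using derivWithin_of_mem_nhds hy
  rw [derivWithin_of_mem_nhds hs]
  exact (heq.differentiableAt_iff.2 hf').hasDerivAt

theorem abs_integral_le_of_abs_le_mul_pow {f : ℝ → ℝ} {c s : ℝ} {m : ℕ} (hs : 0 ≤ s)
    (hf : ∀ t ∈ Ioc 0 s, |f t| ≤ c * t ^ m) :
    |∫ t in (0:ℝ)..s, f t| ≤ c * s ^ (m + 1) / (m + 1) := by
  have := norm_integral_le_of_norm_le (μ := volume) (g := fun t => c * t ^ m) hs
    (ae_of_all _ fun t ht => (Real.norm_eq_abs (f t)).trans_le (hf t ht))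
    ((continuous_const.mul (continuous_pow m)).intervalIntegrable 0 s)
  simpa [intervalIntegral.integral_const_mul, integral_pow, mul_div_assoc] using this

theorem abs_inv_pow_three_mul_integral_le {f : ℝ → ℝ} {c s : ℝ} {m : ℕ} (hs : 0 ≤ s)
    (hf : ∀ t ∈ Ioc 0 s, |f t| ≤ c * t ^ (m + 3)) :
    |(s ^ 3)⁻¹ * ∫ t in (0:ℝ)..s, f t| ≤ c / (m + 4) * s ^ (m + 1) := by
  rcases hs.eq_or_lt with rfl | hs
  · simp
  rw [abs_mul, abs_inv, abs_of_pos (by positivity)]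
  calc (s ^ 3)⁻¹ * |∫ t in (0:ℝ)..s, f t|
      ≤ (s ^ 3)⁻¹ * (c * s ^ (m + 3 + 1) / ((m + 3 : ℕ) + 1)) := by
        gcongr; exact abs_integral_le_of_abs_le_mul_pow hs.le hf
    _ = c / (m + 4) * s ^ (m + 1) := by push_cast; field_simp; ring

namespace LaminarProfile

noncomputable def forcing (γ h : ℝ → ℝ) (t y : ℝ) : ℝ :=
  -(t ^ 3 * γ (t ^ 2 * y) + t * h (t ^ 2 * y))

noncomputable def flux (γ h ψ : ℝ → ℝ) (s : ℝ) : ℝ := ∫ t in (0:ℝ)..s, forcing γ h t (ψ t)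

-- At `s = 0` this is `0⁻¹ * 0 = 0`, which is the required value `ψ'(0) = 0`.
noncomputable def radialSlope (γ h ψ : ℝ → ℝ) (s : ℝ) : ℝ := (s ^ 3)⁻¹ * flux γ h ψ s

noncomputable def picard (γ h : ℝ → ℝ) (lam : ℝ) (ψ : ℝ → ℝ) (r : ℝ) : ℝ :=
  lam + ∫ s in (0:ℝ)..r, radialSlope γ h ψ s

def IsSolution (γ h : ℝ → ℝ) (lam d : ℝ) (ψ : ℝ → ℝ) : Prop :=
  ContDiffOn ℝ 1 ψ (Icc 0 d) ∧ ContDiffOn ℝ 2 ψ (Ioc 0 d) ∧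
    ψ 0 = lam ∧ derivWithin ψ (Icc 0 d) 0 = 0 ∧
    ∀ r ∈ Ioc (0:ℝ) d,
      derivWithin (derivWithin ψ (Icc 0 d)) (Icc 0 d) r + (3 / r) * derivWithin ψ (Icc 0 d) r
        = -γ (r ^ 2 * ψ r) - h (r ^ 2 * ψ r) / r ^ 2

variable {γ h ψ χ : ℝ → ℝ} {lam d : ℝ} {Cγ Ch : NNReal}

theorem abs_forcing_sub_le (hγ : LipschitzWith Cγ γ) (hh : LipschitzWith Ch h) {t : ℝ}
    (ht : t ∈ Icc 0 d) (y z : ℝ) :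
    |forcing γ h t y - forcing γ h t z| ≤ (Cγ * d ^ 2 + Ch) * t ^ 3 * |y - z| := by
  obtain ⟨ht0, htd⟩ := ht
  have hscale : dist (t ^ 2 * y) (t ^ 2 * z) = t ^ 2 * |y - z| := by
    rw [Real.dist_eq, ← mul_sub, abs_mul, abs_of_nonneg (sq_nonneg t)]
  have hγ' := hγ.dist_le_mul (t ^ 2 * y) (t ^ 2 * z)
  have hh' := hh.dist_le_mul (t ^ 2 * y) (t ^ 2 * z)
  rw [hscale, Real.dist_eq] at hγ' hh'
  calc |forcing γ h t y - forcing γ h t z|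
      = |t ^ 3 * (γ (t ^ 2 * y) - γ (t ^ 2 * z)) + t * (h (t ^ 2 * y) - h (t ^ 2 * z))| := by
        rw [← abs_neg]; unfold forcing; ring_nf
    _ ≤ t ^ 3 * |γ (t ^ 2 * y) - γ (t ^ 2 * z)| + t * |h (t ^ 2 * y) - h (t ^ 2 * z)| := by
        refine (abs_add_le _ _).trans_eq ?_
        rw [abs_mul, abs_mul, abs_of_nonneg ht0, abs_of_nonneg (pow_nonneg ht0 3)]
    _ ≤ t ^ 3 * (Cγ * (t ^ 2 * |y - z|)) + t * (Ch * (t ^ 2 * |y - z|)) := by gcongr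
    _ = (Cγ * t ^ 2 + Ch) * t ^ 3 * |y - z| := by ring
    _ ≤ (Cγ * d ^ 2 + Ch) * t ^ 3 * |y - z| := by gcongr

theorem exists_abs_forcing_le (hγ : LipschitzWith Cγ γ) (hh : LipschitzWith Ch h) (hh0 : h 0 = 0)
    (hψ : ContinuousOn ψ (Icc 0 d)) : ∃ K, ∀ t ∈ Icc 0 d, |forcing γ h t (ψ t)| ≤ K * t ^ 3 := by
  obtain ⟨M, hM⟩ := isCompact_Icc.exists_bound_of_continuousOn hψ
  refine ⟨(Cγ * d ^ 2 + Ch) * M + |γ 0|, fun t ht => ?_⟩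
  have h0 : forcing γ h t 0 = -(t ^ 3 * γ 0) := by simp [forcing, hh0]
  have ht3 : 0 ≤ t ^ 3 := pow_nonneg ht.1 3
  calc |forcing γ h t (ψ t)|
      ≤ |forcing γ h t (ψ t) - forcing γ h t 0| + |forcing γ h t 0| := by
        linarith [abs_sub_abs_le_abs_sub (forcing γ h t (ψ t)) (forcing γ h t 0)]
    _ ≤ (Cγ * d ^ 2 + Ch) * t ^ 3 * M + t ^ 3 * |γ 0| := by
        gcongr
        · simpa using (abs_forcing_sub_le hγ hh ht (ψ t) 0).trans
            (by gcongr; rw [sub_zero, ← Real.norm_eq_abs]; exact hM t ht)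
        · rw [h0, abs_neg, abs_mul, abs_of_nonneg ht3]
    _ = ((Cγ * d ^ 2 + Ch) * M + |γ 0|) * t ^ 3 := by ring

theorem continuous_forcing (hγ : Continuous γ) (hh : Continuous h) (hψ : Continuous ψ) :
    Continuous fun t => forcing γ h t (ψ t) := by
  unfold forcing; fun_prop

theorem hasDerivAt_flux (hγ : Continuous γ) (hh : Continuous h) (hψ : Continuous ψ) (r : ℝ) :
    HasDerivAt (flux γ h ψ) (forcing γ h r (ψ r)) r :=
  ((continuous_forcing hγ hh hψ).integral_hasStrictDerivAt 0 r).hasDerivAt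

theorem contDiff_flux (hγ : Continuous γ) (hh : Continuous h) (hψ : Continuous ψ) :
    ContDiff ℝ 1 (flux γ h ψ) := by
  have hderiv : deriv (flux γ h ψ) = fun r => forcing γ h r (ψ r) :=
    funext fun r => (hasDerivAt_flux hγ hh hψ r).deriv
  exact contDiff_one_iff_deriv.2 ⟨fun r => (hasDerivAt_flux hγ hh hψ r).differentiableAt,
    hderiv ▸ continuous_forcing hγ hh hψ⟩

theorem radialSlope_zero : radialSlope γ h ψ 0 = 0 := by simp [radialSlope]

theorem contDiffOn_radialSlope (hγ : Continuous γ) (hh : Continuous h) (hψ : Continuous ψ) :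
    ContDiffOn ℝ 1 (radialSlope γ h ψ) {0}ᶜ :=
  ((contDiff_id.pow 3).contDiffOn.inv fun _ hs => pow_ne_zero 3 hs).mul
    (contDiff_flux hγ hh hψ).contDiffOn

theorem hasDerivAt_radialSlope (hγ : Continuous γ) (hh : Continuous h) (hψ : Continuous ψ)
    {r : ℝ} (hr : r ≠ 0) :
    HasDerivAt (radialSlope γ h ψ)
      (forcing γ h r (ψ r) / r ^ 3 - 3 / r * radialSlope γ h ψ r) r := by
  refine (((hasDerivAt_pow 3 r).inv (pow_ne_zero 3 hr)).mul
    (hasDerivAt_flux hγ hh hψ r)).congr_deriv ?_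
  simp only [radialSlope, Pi.inv_apply]
  field_simp
  ring

theorem exists_abs_radialSlope_le (hγ : LipschitzWith Cγ γ) (hh : LipschitzWith Ch h)
    (hh0 : h 0 = 0) (hψ : ContinuousOn ψ (Icc 0 d)) :
    ∃ K, ∀ s ∈ Icc 0 d, |radialSlope γ h ψ s| ≤ K * s := by
  obtain ⟨K, hK⟩ := exists_abs_forcing_le hγ hh hh0 hψ
  refine ⟨K / 4, fun s hs => ?_⟩
  simpa [radialSlope, flux] using abs_inv_pow_three_mul_integral_le (m := 0) hs.1
    fun t ht => by simpa using hK t ⟨ht.1.le, ht.2.trans hs.2⟩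

theorem continuousOn_radialSlope (hγ : LipschitzWith Cγ γ) (hh : LipschitzWith Ch h)
    (hh0 : h 0 = 0) (hψ : Continuous ψ) : ContinuousOn (radialSlope γ h ψ) (Icc 0 d) := by
  intro s hs
  rcases hs.1.eq_or_lt with rfl | hs0
  · obtain ⟨K, hK⟩ := exists_abs_radialSlope_le hγ hh hh0 hψ.continuousOn (d := d)
    have hlim : Tendsto (fun s => K * s) (𝓝[Icc 0 d] 0) (𝓝 0) :=
      ((continuous_const_mul K).tendsto' 0 0 (mul_zero K)).mono_left nhdsWithin_le_nhds
    rw [ContinuousWithinAt, radialSlope_zero]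
    exact squeeze_zero_norm' (eventually_nhdsWithin_of_forall fun s hs => hK s hs) hlim
  · exact ((contDiffOn_radialSlope hγ.continuous hh.continuous hψ).continuousOn.continuousAt
      (isOpen_compl_singleton.mem_nhds hs0.ne')).continuousWithinAt

theorem intervalIntegrable_radialSlope (hγ : LipschitzWith Cγ γ) (hh : LipschitzWith Ch h)
    (hh0 : h 0 = 0) (hψ : Continuous ψ) {r : ℝ} (hr : r ∈ Icc 0 d) :
    IntervalIntegrable (radialSlope γ h ψ) volume 0 r :=
  ((continuousOn_radialSlope hγ hh hh0 hψ).mono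
    (Icc_subset_Icc_right hr.2)).intervalIntegrable_of_Icc hr.1

theorem hasDerivWithinAt_picard (hγ : LipschitzWith Cγ γ) (hh : LipschitzWith Ch h)
    (hh0 : h 0 = 0) (hψ : Continuous ψ) {r : ℝ} (hr : r ∈ Icc 0 d) :
    HasDerivWithinAt (picard γ h lam ψ) (radialSlope γ h ψ r) (Icc 0 d) r := by
  have hP := continuousOn_radialSlope hγ hh hh0 hψ (d := d)
  have : Fact (r ∈ Icc 0 d) := ⟨hr⟩
  exact (integral_hasDerivWithinAt_right (intervalIntegrable_radialSlope hγ hh hh0 hψ hr)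
    (hP.stronglyMeasurableAtFilter_nhdsWithin measurableSet_Icc r) (hP r hr)).const_add lam

theorem flux_congr {s : ℝ} (hs : 0 ≤ s) (he : EqOn ψ χ (Icc 0 s)) :
    flux γ h ψ s = flux γ h χ s :=
  integral_congr fun t ht => by
    rw [uIcc_of_le hs] at ht
    simp only [he ht]

theorem picard_congr (he : EqOn ψ χ (Icc 0 d)) {r : ℝ} (hr : r ∈ Icc 0 d) :
    picard γ h lam ψ r = picard γ h lam χ r :=
  congrArg (lam + ·) <| integral_congr fun s hs => by
    rw [uIcc_of_le hr.1] at hs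
    simp only [radialSlope, flux_congr hs.1 (he.mono (Icc_subset_Icc_right (hs.2.trans hr.2)))]

theorem abs_picard_sub_le (hγ : LipschitzWith Cγ γ) (hh : LipschitzWith Ch h) (hh0 : h 0 = 0)
    (hψ : Continuous ψ) (hχ : Continuous χ) {B : ℝ} {k : ℕ}
    (hB : ∀ t ∈ Icc 0 d, |ψ t - χ t| ≤ B * t ^ k) {r : ℝ} (hr : r ∈ Icc 0 d) :
    |picard γ h lam ψ r - picard γ h lam χ r|
      ≤ (Cγ * d ^ 2 + Ch) * B / ((k + 4) * (k + 2)) * r ^ (k + 2) := by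
  have hslope : ∀ s ∈ Icc 0 d, |radialSlope γ h ψ s - radialSlope γ h χ s|
      ≤ (Cγ * d ^ 2 + Ch) * B / (k + 4) * s ^ (k + 1) := by
    intro s hs
    rw [radialSlope, radialSlope, flux, flux, ← mul_sub,
      ← integral_sub ((continuous_forcing hγ.continuous hh.continuous hψ).intervalIntegrable 0 s)
        ((continuous_forcing hγ.continuous hh.continuous hχ).intervalIntegrable 0 s)]
    refine abs_inv_pow_three_mul_integral_le hs.1 fun t ht => ?_
    have ht' : t ∈ Icc 0 d := ⟨ht.1.le, ht.2.trans hs.2⟩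
    calc _ ≤ (Cγ * d ^ 2 + Ch) * t ^ 3 * |ψ t - χ t| := abs_forcing_sub_le hγ hh ht' _ _
      _ ≤ (Cγ * d ^ 2 + Ch) * t ^ 3 * (B * t ^ k) :=
        mul_le_mul_of_nonneg_left (hB t ht') (mul_nonneg (by positivity) (pow_nonneg ht'.1 3))
      _ = (Cγ * d ^ 2 + Ch) * B * t ^ (k + 3) := by ring
  rw [picard, picard, add_sub_add_left_eq_sub,
    ← integral_sub (intervalIntegrable_radialSlope hγ hh hh0 hψ hr)
      (intervalIntegrable_radialSlope hγ hh hh0 hχ hr)]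
  refine (abs_integral_le_of_abs_le_mul_pow hr.1
    fun s hs => hslope s ⟨hs.1.le, hs.2.trans hr.2⟩).trans_eq ?_
  push_cast
  field_simp
  ring

noncomputable def picardIcc (lam : ℝ) (hd : 0 ≤ d) (hγ : LipschitzWith Cγ γ)
    (hh : LipschitzWith Ch h) (hh0 : h 0 = 0) (f : C(Icc 0 d, ℝ)) : C(Icc 0 d, ℝ) :=
  ⟨(Icc 0 d).domRestrict (picard γ h lam (IccExtend hd f)), ContinuousOn.domRestrict fun _ hr =>
    (hasDerivWithinAt_picard hγ hh hh0 (continuous_IccExtend_iff.2 f.continuous)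
      hr).continuousWithinAt⟩

theorem abs_iterate_picardIcc_sub_le (hd : 0 ≤ d) (hγ : LipschitzWith Cγ γ)
    (hh : LipschitzWith Ch h) (hh0 : h 0 = 0) (f g : C(Icc 0 d, ℝ)) (n : ℕ) (x : Icc 0 d) :
    |(picardIcc lam hd hγ hh hh0)^[n] f x - (picardIcc lam hd hγ hh hh0)^[n] g x|
      ≤ ((Cγ * d ^ 2 + Ch) / 4) ^ n / n ! * dist f g * (x : ℝ) ^ (2 * n) := by
  induction n generalizing x with
  | zero => simpa [Real.dist_eq] using ContinuousMap.dist_apply_le_dist (f := f) (g := g) x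
  | succ n ih =>
    rw [iterate_succ_apply', iterate_succ_apply']
    refine (abs_picard_sub_le hγ hh hh0 (continuous_IccExtend_iff.2 (ContinuousMap.continuous _))
      (continuous_IccExtend_iff.2 (ContinuousMap.continuous _)) (k := 2 * n)
      (B := ((Cγ * d ^ 2 + Ch) / 4) ^ n / n ! * dist f g) (fun t ht => ?_)
      x.2).trans ?_
    · rw [IccExtend_of_mem _ _ ht, IccExtend_of_mem _ _ ht]
      exact ih ⟨t, ht⟩
    · have hQ : 0 ≤ ((Cγ * d ^ 2 + Ch) / 4) ^ n / n ! * dist f g * (Cγ * d ^ 2 + Ch) *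
          (x : ℝ) ^ (2 * n + 2) := by
        have := x.2.1
        positivity
      calc _ = ((Cγ * d ^ 2 + Ch) / 4) ^ n / n ! * dist f g * (Cγ * d ^ 2 + Ch) *
            (x : ℝ) ^ (2 * n + 2) * (1 / ((2 * n + 4) * (2 * n + 2))) := by push_cast; ring
        _ ≤ ((Cγ * d ^ 2 + Ch) / 4) ^ n / n ! * dist f g * (Cγ * d ^ 2 + Ch) *
            (x : ℝ) ^ (2 * n + 2) * (1 / (4 * (n + 1))) := by
          gcongr _ * (1 / ?_)
          nlinarith [(n.cast_nonneg : (0:ℝ) ≤ n)]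
        _ = _ := by
          rw [Nat.factorial_succ, show 2 * (n + 1) = 2 * n + 2 by ring]
          push_cast
          field_simp
          ring

theorem dist_iterate_picardIcc_le (hd : 0 ≤ d) (hγ : LipschitzWith Cγ γ)
    (hh : LipschitzWith Ch h) (hh0 : h 0 = 0) (n : ℕ) (f g : C(Icc 0 d, ℝ)) :
    dist ((picardIcc lam hd hγ hh hh0)^[n] f) ((picardIcc lam hd hγ hh hh0)^[n] g)
      ≤ ((Cγ * d ^ 2 + Ch) * d ^ 2 / 4) ^ n / n ! * dist f g := by
  refine (ContinuousMap.dist_le (by positivity)).2 fun x => ?_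
  rw [Real.dist_eq]
  calc _ ≤ ((Cγ * d ^ 2 + Ch) / 4) ^ n / n ! * dist f g * (x : ℝ) ^ (2 * n) :=
        abs_iterate_picardIcc_sub_le hd hγ hh hh0 f g n x
    _ ≤ ((Cγ * d ^ 2 + Ch) / 4) ^ n / n ! * dist f g * d ^ (2 * n) := by
        gcongr
        · exact x.2.1
        · exact x.2.2
    _ = _ := by rw [pow_mul, div_pow, div_pow, mul_pow]; ring

theorem exists_eqOn_picard (hd : 0 ≤ d) (hγ : LipschitzWith Cγ γ) (hh : LipschitzWith Ch h)
    (hh0 : h 0 = 0) :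
    ∃ ψ, Continuous ψ ∧ EqOn (picard γ h lam ψ) ψ (Icc 0 d) ∧
      ∀ χ, ContinuousOn χ (Icc 0 d) → EqOn (picard γ h lam χ) χ (Icc 0 d) → EqOn ψ χ (Icc 0 d) := by
  obtain ⟨f, hf, hf_unique⟩ := existsUnique_isFixedPt_of_dist_iterate_le (by positivity)
    (dist_iterate_picardIcc_le (lam := lam) hd hγ hh hh0)
  refine ⟨IccExtend hd f, continuous_IccExtend_iff.2 f.continuous, fun r hr => ?_,
    fun χ hχ hχfix r hr => ?_⟩
  · rw [IccExtend_of_mem _ _ hr]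
    exact congrArg (· ⟨r, hr⟩) hf
  · let g : C(Icc 0 d, ℝ) := ⟨(Icc 0 d).domRestrict χ, hχ.domRestrict⟩
    have hg : EqOn (IccExtend hd g) χ (Icc 0 d) := fun r hr => IccExtend_of_mem _ _ hr
    have hgf : g = f := hf_unique g <| ContinuousMap.ext fun x =>
      (picard_congr hg x.2).trans (hχfix x.2)
    rw [← hg hr, hgf]

theorem isSolution_of_eqOn_picard (hd : 0 < d) (hγ : LipschitzWith Cγ γ) (hh : LipschitzWith Ch h)
    (hh0 : h 0 = 0) (hψ : Continuous ψ) (hfix : EqOn (picard γ h lam ψ) ψ (Icc 0 d)) :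
    IsSolution γ h lam d ψ := by
  have hderiv : ∀ r ∈ Icc 0 d, HasDerivWithinAt ψ (radialSlope γ h ψ r) (Icc 0 d) r :=
    fun r hr => (hasDerivWithinAt_picard hγ hh hh0 hψ hr).congr (fun y hy => (hfix hy).symm)
      (hfix hr).symm
  have hderiv' : ∀ r ∈ Ioc 0 d, HasDerivWithinAt ψ (radialSlope γ h ψ r) (Ioc 0 d) r :=
    fun r hr => (hderiv r (Ioc_subset_Icc_self hr)).mono Ioc_subset_Icc_self
  have hslope : EqOn (derivWithin ψ (Icc 0 d)) (radialSlope γ h ψ) (Icc 0 d) :=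
    fun r hr => (hderiv r hr).derivWithin (uniqueDiffOn_Icc hd r hr)
  have hslope' : EqOn (derivWithin ψ (Ioc 0 d)) (radialSlope γ h ψ) (Ioc 0 d) :=
    fun r hr => (hderiv' r hr).derivWithin (uniqueDiffOn_Ioc 0 d r hr)
  have h0 : (0 : ℝ) ∈ Icc 0 d := left_mem_Icc.2 hd.le
  refine ⟨?_, ?_, ?_, ?_, fun r hr => ?_⟩
  · exact (contDiffOn_one_iff_derivWithin (uniqueDiffOn_Icc hd)).2
      ⟨fun r hr => (hderiv r hr).differentiableWithinAt,
        (continuousOn_radialSlope hγ hh hh0 hψ).congr hslope⟩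
  · exact (contDiffOn_succ_iff_derivWithin (n := 1) (uniqueDiffOn_Ioc 0 d)).2
      ⟨fun r hr => (hderiv' r hr).differentiableWithinAt, by simp,
        ((contDiffOn_radialSlope hγ.continuous hh.continuous hψ).mono
          fun r hr => hr.1.ne').congr hslope'⟩
  · simpa [picard] using (hfix h0).symm
  · rw [hslope h0, radialSlope_zero]
  · have hr' := Ioc_subset_Icc_self hr
    have hP := (hasDerivAt_radialSlope hγ.continuous hh.continuous hψ hr.1.ne').hasDerivWithinAt
      (s := Icc 0 d)
    rw [derivWithin_congr hslope (hslope hr'), hP.derivWithin (uniqueDiffOn_Icc hd r hr'),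
      hslope hr', forcing]
    have hr0 := hr.1.ne'
    field_simp
    ring

theorem derivWithin_eqOn_radialSlope (hd : 0 < d) (hγ : Continuous γ) (hh : Continuous h)
    (hψ : IsSolution γ h lam d ψ) :
    EqOn (derivWithin ψ (Icc 0 d)) (radialSlope γ h ψ) (Icc 0 d) := by
  obtain ⟨hC1, hC2, -, hslope0, hode⟩ := hψ
  have hcont : ContinuousOn (derivWithin ψ (Icc 0 d)) (Icc 0 d) :=
    hC1.continuousOn_derivWithin (uniqueDiffOn_Icc hd) le_rfl
  have hderiv : ∀ x ∈ Ioo 0 d, HasDerivAt (fun u => u ^ 3 * derivWithin ψ (Icc 0 d) u)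
      (forcing γ h x (ψ x)) x := by
    intro x hx
    refine ((hasDerivAt_pow 3 x).mul (hasDerivAt_derivWithin_of_contDiffOn hC2
      (Ioc_mem_nhds hx.1 hx.2) (Icc_mem_nhds hx.1 hx.2))).congr_deriv ?_
    have := hode x (Ioo_subset_Ioc_self hx)
    have hx0 := hx.1.ne'
    rw [forcing]
    field_simp at this ⊢
    linear_combination x * this
  have hflux : ∀ s ∈ Icc 0 d, flux γ h ψ s = s ^ 3 * derivWithin ψ (Icc 0 d) s := by
    intro s hs
    have hsub : Icc 0 s ⊆ Icc 0 d := Icc_subset_Icc_right hs.2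
    have hforcing : ContinuousOn (fun t => forcing γ h t (ψ t)) (Icc 0 d) := by
      have := hC1.continuousOn
      unfold forcing
      fun_prop
    simpa [flux] using integral_eq_sub_of_hasDerivAt_of_le hs.1
      (((continuous_pow 3).continuousOn.mul hcont).mono hsub)
      (fun x hx => hderiv x ⟨hx.1, hx.2.trans_le hs.2⟩)
      ((hforcing.mono hsub).intervalIntegrable_of_Icc hs.1)
  intro s hs
  rcases hs.1.eq_or_lt with rfl | hs0
  · rw [hslope0, radialSlope_zero]
  · rw [radialSlope, hflux s hs]
    field_simp

theorem eqOn_picard_of_isSolution (hd : 0 < d) (hγ : Continuous γ) (hh : Continuous h)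
    (hψ : IsSolution γ h lam d ψ) : EqOn (picard γ h lam ψ) ψ (Icc 0 d) := by
  intro r hr
  have hslope := derivWithin_eqOn_radialSlope hd hγ hh hψ
  obtain ⟨hC1, -, hψ0, -⟩ := hψ
  have hsub : Icc 0 r ⊆ Icc 0 d := Icc_subset_Icc_right hr.2
  have hderiv : ∀ x ∈ Ioo 0 r, HasDerivAt ψ (radialSlope γ h ψ x) x := by
    intro x hx
    have hmem : Icc 0 d ∈ 𝓝 x := Icc_mem_nhds hx.1 (hx.2.trans_le hr.2)
    rw [← hslope (mem_of_mem_nhds hmem), derivWithin_of_mem_nhds hmem]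
    exact ((hC1.differentiableOn one_ne_zero x (mem_of_mem_nhds hmem)).differentiableAt
      hmem).hasDerivAt
  rw [picard, integral_eq_sub_of_hasDerivAt_of_le hr.1 (hC1.continuousOn.mono hsub) hderiv
    ((((hC1.continuousOn_derivWithin (uniqueDiffOn_Icc hd) le_rfl).congr hslope.symm).mono
      hsub).intervalIntegrable_of_Icc hr.1), hψ0]
  ring

end LaminarProfile

open LaminarProfile in
theorem stmt_16 (γ F : ℝ → ℝ)
    (hγ : ContDiff ℝ 1 γ) (hγ' : ∃ C : ℝ, ∀ x : ℝ, |deriv γ x| ≤ C)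
    (hF : ContDiff ℝ 2 F) (hF0 : F 0 = 0)
    (hFF' : ∃ C : ℝ, ∀ x : ℝ, |deriv (fun s => F s * deriv F s) x| ≤ C)
    (lam : ℝ) (d : ℝ) (hd : 0 < d) :
    ∃ ψ : ℝ → ℝ,
      (ContDiffOn ℝ 1 ψ (Icc 0 d) ∧ ContDiffOn ℝ 2 ψ (Ioc 0 d) ∧
        ψ 0 = lam ∧ derivWithin ψ (Icc 0 d) 0 = 0 ∧
        ∀ r ∈ Ioc (0:ℝ) d,
          derivWithin (derivWithin ψ (Icc 0 d)) (Icc 0 d) r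
              + (3 / r) * derivWithin ψ (Icc 0 d) r
            = -γ (r^2 * ψ r) - F (r^2 * ψ r) * deriv F (r^2 * ψ r) / r^2) ∧
      ∀ ψ₂ : ℝ → ℝ,
        (ContDiffOn ℝ 1 ψ₂ (Icc 0 d) ∧ ContDiffOn ℝ 2 ψ₂ (Ioc 0 d) ∧
          ψ₂ 0 = lam ∧ derivWithin ψ₂ (Icc 0 d) 0 = 0 ∧
          ∀ r ∈ Ioc (0:ℝ) d,
            derivWithin (derivWithin ψ₂ (Icc 0 d)) (Icc 0 d) r
                + (3 / r) * derivWithin ψ₂ (Icc 0 d) r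
              = -γ (r^2 * ψ₂ r) - F (r^2 * ψ₂ r) * deriv F (r^2 * ψ₂ r) / r^2) →
        EqOn ψ ψ₂ (Icc 0 d) := by
  obtain ⟨Cγ, hCγ⟩ := hγ'
  obtain ⟨Ch, hCh⟩ := hFF'
  have hγL := lipschitzWith_of_abs_deriv_le (hγ.differentiable one_ne_zero) hCγ
  have hhL := lipschitzWith_of_abs_deriv_le
    ((hF.differentiable two_ne_zero).mul hF.differentiable_deriv_two) hCh
  have hh0 : F 0 * deriv F 0 = 0 := by rw [hF0, zero_mul]
  obtain ⟨ψ, hψ, hfix, hunique⟩ := exists_eqOn_picard (lam := lam) hd.le hγL hhL hh0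
  refine ⟨ψ, isSolution_of_eqOn_picard hd hγL hhL hh0 hψ hfix, fun ψ₂ hψ₂ => ?_⟩
  exact hunique ψ₂ hψ₂.1.continuousOn
    (eqOn_picard_of_isSolution hd hγL.continuous hhL.continuous hψ₂)
end

section
/- For every b > 0 and every k ∈ (0,1), the constant mean curvature κ^{b,k} := -2(E(k) + √(1-k²)·K(k)) / (π b (1 + √(1-k²))) satisfies the strict bounds -1/b < κ^{b,k} < -2/(π b); equivalently, 1 < (E(k) + √(1-k²)·K(k)) / (1 + √(1-k²)) < π/2 for all k ∈ (0,1). -/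
open Real

/-!
With `Δ(u) = √(1 - k² sin² u)` and `c = √(1 - k²)` we have `c ≤ Δ ≤ 1`, hence
`(1 - Δ)(Δ - c) ≥ 0`, i.e. `Δ + c / Δ ≤ 1 + c`, strictly for `0 < u < π/2`; integrating over
`[0, π/2]` gives `E + c K < (1 + c) π/2`. For the lower bound, `Δ ≥ cos` gives `E ≥ 1` and
`Δ ≤ 1` gives `K ≥ π/2 > 1`, so `E + c K > 1 + c`.
-/

theorem add_div_le_one_add {c t : ℝ} (ht : 0 < t) (hct : c ≤ t) (ht1 : t ≤ 1) :
    t + c / t ≤ 1 + c := by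
  rw [← sub_nonneg, show 1 + c - (t + c / t) = (1 - t) * (t - c) / t by field_simp; ring]
  exact div_nonneg (mul_nonneg (by linarith) (by linarith)) ht.le

theorem add_div_lt_one_add {c t : ℝ} (ht : 0 < t) (hct : c < t) (ht1 : t < 1) :
    t + c / t < 1 + c := by
  rw [← sub_pos, show 1 + c - (t + c / t) = (1 - t) * (t - c) / t by field_simp; ring]
  exact div_pos (mul_pos (by linarith) (by linarith)) ht

noncomputable def ellDelta (k u : ℝ) : ℝ :=
  √(1 - k ^ 2 * sin u ^ 2)

namespace ellDelta

variable {k : ℝ}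

theorem continuous (k : ℝ) : Continuous (ellDelta k) := by
  unfold ellDelta
  fun_prop

theorem pos (hk : k ^ 2 < 1) (u : ℝ) : 0 < ellDelta k u :=
  sqrt_pos.mpr (by nlinarith [sin_sq_le_one u, sq_nonneg (sin u)])

theorem le_one (k u : ℝ) : ellDelta k u ≤ 1 :=
  sqrt_le_one.mpr (sub_le_self _ (by positivity))

theorem sqrt_one_sub_sq_le (k u : ℝ) : √(1 - k ^ 2) ≤ ellDelta k u :=
  sqrt_le_sqrt (by nlinarith [sin_sq_le_one u, sq_nonneg k])

theorem cos_le (hk : k ^ 2 ≤ 1) (u : ℝ) : cos u ≤ ellDelta k u :=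
  (le_abs_self _).trans <| abs_le_sqrt <| by nlinarith [sin_sq_add_cos_sq u, sq_nonneg (sin u)]

theorem lt_one (hk : k ≠ 0) {u : ℝ} (hu : sin u ≠ 0) : ellDelta k u < 1 :=
  (sqrt_lt' one_pos).mpr <| by
    have : 0 < k ^ 2 * sin u ^ 2 := by positivity
    linarith

theorem sqrt_one_sub_sq_lt (hk : k ≠ 0) (hk1 : k ^ 2 ≤ 1) {u : ℝ} (hu : sin u ^ 2 < 1) :
    √(1 - k ^ 2) < ellDelta k u :=
  sqrt_lt_sqrt (by linarith) <| by
    have : 0 < k ^ 2 * (1 - sin u ^ 2) := mul_pos (by positivity) (by linarith)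
    linarith

end ellDelta

theorem ellE_eq_integral_ellDelta (k : ℝ) : ellE k = ∫ u in (0)..(π / 2), ellDelta k u := rfl

theorem ellK_eq_integral_one_div_ellDelta (k : ℝ) :
    ellK k = ∫ u in (0)..(π / 2), 1 / ellDelta k u := rfl

section

variable {k : ℝ}

theorem continuous_one_div_ellDelta (hk : k ^ 2 < 1) : Continuous fun u ↦ 1 / ellDelta k u :=
  continuous_const.div (ellDelta.continuous k) fun u ↦ (ellDelta.pos hk u).ne'

theorem pi_div_two_le_ellK (hk : k ^ 2 < 1) : π / 2 ≤ ellK k :=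
  calc π / 2 = ∫ _ in (0)..(π / 2), (1 : ℝ) := by simp
    _ ≤ ellK k := intervalIntegral.integral_mono_on pi_div_two_pos.le intervalIntegrable_const
          ((continuous_one_div_ellDelta hk).intervalIntegrable _ _)
          fun u _ ↦ one_le_one_div (ellDelta.pos hk u) (ellDelta.le_one k u)

theorem one_le_ellE (hk : k ^ 2 ≤ 1) : 1 ≤ ellE k :=
  calc 1 = ∫ u in (0)..(π / 2), cos u := by simp
    _ ≤ ellE k := intervalIntegral.integral_mono_on pi_div_two_pos.le
          (continuous_cos.intervalIntegrable _ _) ((ellDelta.continuous k).intervalIntegrable _ _)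
          fun u _ ↦ ellDelta.cos_le hk u

theorem one_add_sqrt_lt_ellE_add_mul_ellK (hk : k ^ 2 < 1) :
    1 + √(1 - k ^ 2) < ellE k + √(1 - k ^ 2) * ellK k := by
  have hc : 0 < √(1 - k ^ 2) := sqrt_pos.mpr (by linarith)
  have hK : 1 < ellK k := by linarith [pi_gt_three, pi_div_two_le_ellK hk]
  have hcK : √(1 - k ^ 2) * 1 < √(1 - k ^ 2) * ellK k := mul_lt_mul_of_pos_left hK hc
  linarith [one_le_ellE hk.le]

theorem ellE_add_mul_ellK_lt (hk0 : k ≠ 0) (hk1 : k ^ 2 < 1) :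
    ellE k + √(1 - k ^ 2) * ellK k < π / 2 * (1 + √(1 - k ^ 2)) := by
  set c := √(1 - k ^ 2)
  have hπ4 : sin (π / 4) ^ 2 = 1 / 2 := by
    rw [sin_pi_div_four, div_pow, sq_sqrt zero_le_two]; norm_num
  calc ellE k + c * ellK k = ∫ u in (0)..(π / 2), (ellDelta k u + c / ellDelta k u) := by
        rw [ellE_eq_integral_ellDelta, ellK_eq_integral_one_div_ellDelta,
          ← intervalIntegral.integral_const_mul, ← intervalIntegral.integral_add
            ((ellDelta.continuous k).intervalIntegrable _ _)
            (((continuous_one_div_ellDelta hk1).intervalIntegrable _ _).const_mul c)]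
        simp only [mul_one_div]
    _ < ∫ _ in (0)..(π / 2), (1 + c) := by
        refine intervalIntegral.integral_lt_integral_of_continuousOn_of_le_of_exists_lt
          pi_div_two_pos ?_ continuousOn_const
          (fun u _ ↦ add_div_le_one_add (ellDelta.pos hk1 u) (ellDelta.sqrt_one_sub_sq_le k u)
            (ellDelta.le_one k u))
          ⟨π / 4, ⟨by positivity, by linarith [pi_pos]⟩, add_div_lt_one_add (ellDelta.pos hk1 _)
            (ellDelta.sqrt_one_sub_sq_lt hk0 hk1.le (by rw [hπ4]; norm_num))
            (ellDelta.lt_one hk0 (by rw [sin_pi_div_four]; positivity))⟩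
        exact ((ellDelta.continuous k).add (continuous_const.div (ellDelta.continuous k)
          fun u ↦ (ellDelta.pos hk1 u).ne')).continuousOn
    _ = π / 2 * (1 + c) := by simp; ring

end

theorem kappa_eq (b k : ℝ) :
    kappa b k = -(2 / (π * b)) * ((ellE k + √(1 - k ^ 2) * ellK k) / (1 + √(1 - k ^ 2))) := by
  simp only [kappa, div_eq_mul_inv, mul_inv]; ring

theorem stmt_17 (b k : ℝ) (hb : 0 < b) (hk : k ∈ Set.Ioo (0:ℝ) 1) :
    (-1 / b < kappa b k ∧ kappa b k < -2 / (π * b)) ∧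
    (1 < (ellE k + Real.sqrt (1 - k^2) * ellK k) / (1 + Real.sqrt (1 - k^2)) ∧
      (ellE k + Real.sqrt (1 - k^2) * ellK k) / (1 + Real.sqrt (1 - k^2)) < π / 2) := by
  obtain ⟨hk0, hk1⟩ := hk
  have hk2 : k ^ 2 < 1 := by nlinarith
  have hc : 0 < 1 + √(1 - k ^ 2) := by positivity
  have hlow := (one_lt_div hc).mpr (one_add_sqrt_lt_ellE_add_mul_ellK hk2)
  have hup := (div_lt_iff₀ hc).mpr (ellE_add_mul_ellK_lt hk0.ne' hk2)
  have hneg : -(2 / (π * b)) < 0 := neg_neg_of_pos (by positivity)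
  refine ⟨⟨?_, ?_⟩, hlow, hup⟩ <;> rw [kappa_eq]
  · calc -1 / b = -(2 / (π * b)) * (π / 2) := by field_simp
      _ < _ := mul_lt_mul_of_neg_left hup hneg
  · calc _ < -(2 / (π * b)) * 1 := mul_lt_mul_of_neg_left hlow hneg
      _ = -2 / (π * b) := by ring
end
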